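/- For every MBSP instance with synchronization parameter L = 0 and every valid schedule of that instance, the asynchronous cost of the schedule is at most its synchronous cost. -/

import Mathlib

namespace MBSP

/-- A transition (pebbling move) of a single processor. -/
inductive Op (ν : Type) where
  | load : ν → Op ν
  | save : ν → Op ν
  | compute : ν → Op ν
  | delete : ν → Op ν
deriving DecidableEq

/-- An MBSP instance: a DAG with compute weights `ω`, memory weights `μ`,
`P` processors, cache capacity `r`, communication cost `g` and synchronization cost `L`. -/
structure Inst (ν : Type) where
  edge : ν → ν → Prop
  ω : ν → ℝ
  μ : ν → ℝ
  P : ℕ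
  r : ℝ
  g : ℝ
  L : ℝ

variable {ν : Type} [DecidableEq ν]

def isSource (I : Inst ν) (v : ν) : Prop := ¬ ∃ u, I.edge u v

def isSink (I : Inst ν) (v : ν) : Prop := ¬ ∃ u, I.edge v u

def Acyclic (I : Inst ν) : Prop := ∀ v, ¬ Relation.TransGen I.edge v v

def opCost (I : Inst ν) : Op ν → ℝ
  | .load v => I.μ v * I.g
  | .save v => I.μ v * I.g
  | .compute v => I.ω v
  | .delete _ => 0

def applyOp (R B : Finset ν) : Op ν → Finset ν × Finset ν
  | .load v => (insert v R, B)
  | .save v => (R, insert v B)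
  | .compute v => (insert v R, B)
  | .delete v => (R.erase v, B)

def opOK (I : Inst ν) (R B : Finset ν) : Op ν → Prop
  | .load v => v ∈ B
  | .save v => v ∈ R
  | .compute v => (∃ u, I.edge u v) ∧ ∀ u, I.edge u v → u ∈ R
  | .delete _ => True

/-- The memory bound for a cache content `R`. -/
def memOK (I : Inst ν) (R : Finset ν) : Prop := ∑ v ∈ R, I.μ v ≤ I.r

/-- Run a sequence of transitions of one processor on a pair (cache, slow memory). -/
def run (R B : Finset ν) : List (Op ν) → Finset ν × Finset ν
  | [] => (R, B)
  | op :: rest => run (applyOp R B op).1 (applyOp R B op).2 rest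

/-- Validity of a sequence of transitions of one processor: every precondition holds
when the transition is applied and the memory bound holds throughout. -/
def seqValid (I : Inst ν) (R B : Finset ν) : List (Op ν) → Prop
  | [] => True
  | op :: rest => opOK I R B op ∧ memOK I (applyOp R B op).1 ∧
      seqValid I (applyOp R B op).1 (applyOp R B op).2 rest

/-- A superstep: for every processor, a compute phase (computes and deletes),
then a save phase, a delete phase and a load phase. -/
structure Superstep (ν : Type) (P : ℕ) where
  comp : Fin P → List (Op ν)
  save : Fin P → List ν
  del : Fin P → List ν
  load : Fin P → List ν

structure Config (ν : Type) (P : ℕ) where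
  R : Fin P → Finset ν
  B : Finset ν

abbrev Schedule (ν : Type) (P : ℕ) := List (Superstep ν P)

variable {P : ℕ}

def compOnly (l : List (Op ν)) : Prop :=
  ∀ op ∈ l, (∃ v, op = Op.compute v) ∨ (∃ v, op = Op.delete v)

def afterComp (c : Config ν P) (S : Superstep ν P) (p : Fin P) : Finset ν :=
  (run (c.R p) c.B (S.comp p)).1

/-- The shared slow memory after the save phases of all processors. -/
def newB (c : Config ν P) (S : Superstep ν P) : Finset ν :=
  c.B ∪ Finset.univ.biUnion (fun p => (S.save p).toFinset)

def afterDel (c : Config ν P) (S : Superstep ν P) (p : Fin P) : Finset ν :=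
  (S.del p).foldl Finset.erase (afterComp c S p)

def afterLoad (c : Config ν P) (S : Superstep ν P) (p : Fin P) : Finset ν :=
  afterDel c S p ∪ (S.load p).toFinset

/-- The configuration reached after executing a superstep. -/
def stepConfig (c : Config ν P) (S : Superstep ν P) : Config ν P :=
  ⟨fun p => afterLoad c S p, newB c S⟩

/-- Validity of a superstep at a configuration. -/
def ssValid (I : Inst ν) (c : Config ν I.P) (S : Superstep ν I.P) : Prop :=
  (∀ p, compOnly (S.comp p)) ∧
  (∀ p, seqValid I (c.R p) c.B (S.comp p)) ∧
  (∀ p, ∀ v ∈ S.save p, v ∈ afterComp c S p) ∧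
  (∀ p, ∀ v ∈ S.load p, v ∈ newB c S) ∧
  (∀ p, memOK I (afterLoad c S p))

def runSched (c : Config ν P) : Schedule ν P → Config ν P
  | [] => c
  | S :: rest => runSched (stepConfig c S) rest

def schedValidFrom (I : Inst ν) (c : Config ν I.P) : Schedule ν I.P → Prop
  | [] => True
  | S :: rest => ssValid I c S ∧ schedValidFrom I (stepConfig c S) rest

/-- `B` is exactly the set of sources of the DAG. -/
def initB (I : Inst ν) (B : Finset ν) : Prop := ∀ v, v ∈ B ↔ isSource I v

/-- A valid MBSP schedule: starts with empty caches and the sources in slow memory,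
every transition is legal and the memory bound holds throughout, and at the end
every sink is in slow memory. -/
def Valid (I : Inst ν) (sched : Schedule ν I.P) : Prop :=
  ∃ B0 : Finset ν, initB I B0 ∧
    schedValidFrom I ⟨fun _ => ∅, B0⟩ sched ∧
    ∀ v, isSink I v → v ∈ (runSched (⟨fun _ => ∅, B0⟩ : Config ν I.P) sched).B

def listCost (I : Inst ν) (l : List (Op ν)) : ℝ := (l.map (opCost I)).sum

def ioCost (I : Inst ν) (l : List ν) : ℝ := (l.map (fun v => I.μ v * I.g)).sum

/-- The synchronous cost of a superstep. -/
noncomputable def ssCost (I : Inst ν) (S : Superstep ν I.P) : ℝ :=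
  (⨆ p : Fin I.P, listCost I (S.comp p)) + (⨆ p : Fin I.P, ioCost I (S.save p)) +
    (⨆ p : Fin I.P, ioCost I (S.load p)) + I.L

/-- The synchronous cost of a schedule. -/
noncomputable def syncCost (I : Inst ν) (sched : Schedule ν I.P) : ℝ :=
  (sched.map (ssCost I)).sum

/-- Finishing times of the saves in a save phase starting at time `t`. -/
def saveFinishes (I : Inst ν) : ℝ → List ν → List (ν × ℝ)
  | _, [] => []
  | t, v :: rest => (v, t + I.μ v * I.g) :: saveFinishes I (t + I.μ v * I.g) rest

def minSaveTime (entries : List (ν × ℝ)) (v : ν) : Option ℝ :=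
  ((entries.filter (fun e => e.1 == v)).map Prod.snd).min?

/-- Finishing time of a load phase: each load waits for the value to be available
in slow memory (time `Γ v`). -/
def loadFold (I : Inst ν) (Γ : ν → Option ℝ) : ℝ → List ν → ℝ
  | t, [] => t
  | t, v :: rest => loadFold I Γ (max t ((Γ v).getD 0) + I.μ v * I.g) rest

/-- One superstep of the asynchronous execution: updates the finishing time of
every processor and the availability times `Γ` of the values in slow memory. -/
def asyncSS (I : Inst ν) (S : Superstep ν I.P)
    (st : (Fin I.P → ℝ) × (ν → Option ℝ)) : (Fin I.P → ℝ) × (ν → Option ℝ) :=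
  let t1 : Fin I.P → ℝ := fun p => st.1 p + listCost I (S.comp p)
  let entries : List (ν × ℝ) :=
    ((List.finRange I.P).map (fun p => saveFinishes I (t1 p) (S.save p))).flatten
  let Γ' : ν → Option ℝ := fun v => (st.2 v).orElse (fun _ => minSaveTime entries v)
  let t2 : Fin I.P → ℝ := fun p => t1 p + ioCost I (S.save p)
  (fun p => loadFold I Γ' (t2 p) (S.load p), Γ')

def asyncRun (I : Inst ν) (st : (Fin I.P → ℝ) × (ν → Option ℝ)) :
    Schedule ν I.P → (Fin I.P → ℝ) × (ν → Option ℝ)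
  | [] => st
  | S :: rest => asyncRun I (asyncSS I S st) rest

/-- The asynchronous cost (makespan) of a schedule. -/
noncomputable def asyncCost (I : Inst ν) (sched : Schedule ν I.P) : ℝ :=
  ⨆ p : Fin I.P, (asyncRun I (fun _ => (0 : ℝ), fun _ => none) sched).1 p

end MBSP

/-!
Under the asynchronous execution a processor never waits longer than the synchronous barriers
would make it wait. By induction over the supersteps: if every processor has finished, and
every value saved so far is available in slow memory, by time `T`, then after the next
superstep `S` every save is done by `T + A + B` (the maxima of the compute and save phase
costs), so each load waits at most until then, and every processor finishes by
`T + A + B + C = T + ssCost I S` (this uses `L = 0`).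
-/

namespace MBSP

variable {ν : Type} {I : Inst ν}

lemma listCost_nonneg (hω : ∀ v, 0 ≤ I.ω v) (hμ : ∀ v, 0 ≤ I.μ v) (hg : 0 ≤ I.g)
    (l : List (Op ν)) : 0 ≤ listCost I l := by
  refine List.sum_nonneg ?_
  simp only [List.mem_map]
  rintro _ ⟨op, -, rfl⟩
  cases op with
  | load v | save v => exact mul_nonneg (hμ v) hg
  | compute v => exact hω v
  | delete v => exact le_rfl

lemma ioCost_nonneg (hμ : ∀ v, 0 ≤ I.μ v) (hg : 0 ≤ I.g) (l : List ν) : 0 ≤ ioCost I l := by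
  refine List.sum_nonneg ?_
  simp only [List.mem_map]
  rintro _ ⟨v, -, rfl⟩
  exact mul_nonneg (hμ v) hg

lemma ioCost_cons (v : ν) (l : List ν) : ioCost I (v :: l) = I.μ v * I.g + ioCost I l := by
  simp [ioCost]

lemma ssCost_nonneg (hω : ∀ v, 0 ≤ I.ω v) (hμ : ∀ v, 0 ≤ I.μ v) (hg : 0 ≤ I.g)
    (hL : I.L = 0) (S : Superstep ν I.P) : 0 ≤ ssCost I S := by
  have hA := Real.iSup_nonneg fun p => listCost_nonneg hω hμ hg (S.comp p)
  have hB := Real.iSup_nonneg fun p => ioCost_nonneg hμ hg (S.save p)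
  have hC := Real.iSup_nonneg fun p => ioCost_nonneg hμ hg (S.load p)
  rw [ssCost, hL]
  linarith

lemma syncCost_nonneg (hω : ∀ v, 0 ≤ I.ω v) (hμ : ∀ v, 0 ≤ I.μ v) (hg : 0 ≤ I.g)
    (hL : I.L = 0) (sched : Schedule ν I.P) : 0 ≤ syncCost I sched := by
  refine List.sum_nonneg ?_
  simp only [List.mem_map]
  rintro _ ⟨S, -, rfl⟩
  exact ssCost_nonneg hω hμ hg hL S

lemma saveFinishes_le (hμ : ∀ v, 0 ≤ I.μ v) (hg : 0 ≤ I.g) :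
    ∀ {l : List ν} {t : ℝ} {e : ν × ℝ}, e ∈ saveFinishes I t l → e.2 ≤ t + ioCost I l
  | [], _, _, he => by simp [saveFinishes] at he
  | v :: l, t, e, he => by
    rw [saveFinishes, List.mem_cons] at he
    rw [ioCost_cons]
    rcases he with rfl | he
    · linarith [ioCost_nonneg hμ hg l]
    · linarith [saveFinishes_le hμ hg he]

lemma loadFold_le (hμ : ∀ v, 0 ≤ I.μ v) (hg : 0 ≤ I.g) (Γ : ν → Option ℝ) :
    ∀ {l : List ν} {t T : ℝ}, (∀ v, (Γ v).getD 0 ≤ T) → t ≤ T →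
      loadFold I Γ t l ≤ T + ioCost I l
  | [], _, _, _, ht => by simpa [loadFold, ioCost] using ht
  | v :: l, t, T, hΓ, ht => by
    have hc := mul_nonneg (hμ v) hg
    rw [loadFold, ioCost_cons, ← add_assoc]
    exact loadFold_le hμ hg Γ (fun u => (hΓ u).trans (le_add_of_nonneg_right hc))
      (by linarith [max_le ht (hΓ v)])

/-- A value never saved (`none`) counts as available at time `0`, as in `loadFold`. -/
def SettledBy (st : (Fin I.P → ℝ) × (ν → Option ℝ)) (T : ℝ) : Prop :=
  (∀ p, st.1 p ≤ T) ∧ ∀ v, (st.2 v).getD 0 ≤ T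

variable [DecidableEq ν]

lemma minSaveTime_getD_le {entries : List (ν × ℝ)} {T : ℝ} (hT : 0 ≤ T)
    (h : ∀ e ∈ entries, e.2 ≤ T) (v : ν) : (minSaveTime entries v).getD 0 ≤ T := by
  cases hmin : minSaveTime entries v with
  | none => exact hT
  | some x =>
    obtain ⟨e, he, rfl⟩ := List.mem_map.mp (List.min?_mem hmin)
    exact h e (List.mem_filter.mp he).1

lemma settledBy_asyncSS (hω : ∀ v, 0 ≤ I.ω v) (hμ : ∀ v, 0 ≤ I.μ v) (hg : 0 ≤ I.g)
    (hL : I.L = 0) (S : Superstep ν I.P) {st : (Fin I.P → ℝ) × (ν → Option ℝ)} {T : ℝ}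
    (hT : 0 ≤ T) (h : SettledBy st T) : SettledBy (asyncSS I S st) (T + ssCost I S) := by
  obtain ⟨hproc, havail⟩ := h
  set A := ⨆ p, listCost I (S.comp p)
  set B := ⨆ p, ioCost I (S.save p)
  set C := ⨆ p, ioCost I (S.load p)
  have hA : ∀ p, listCost I (S.comp p) ≤ A := le_ciSup (Finite.bddAbove_range _)
  have hB : ∀ p, ioCost I (S.save p) ≤ B := le_ciSup (Finite.bddAbove_range _)
  have hC : ∀ p, ioCost I (S.load p) ≤ C := le_ciSup (Finite.bddAbove_range _)
  have hA0 : 0 ≤ A := Real.iSup_nonneg fun p => listCost_nonneg hω hμ hg (S.comp p)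
  have hB0 : 0 ≤ B := Real.iSup_nonneg fun p => ioCost_nonneg hμ hg (S.save p)
  have hC0 : 0 ≤ C := Real.iSup_nonneg fun p => ioCost_nonneg hμ hg (S.load p)
  have hss : ssCost I S = A + B + C := by rw [ssCost, hL, add_zero]
  have hsaves : ∀ p, ∀ e ∈ saveFinishes I (st.1 p + listCost I (S.comp p)) (S.save p),
      e.2 ≤ T + A + B := fun p e he => by
    linarith [saveFinishes_le hμ hg he, hproc p, hA p, hB p]
  have havail' : ∀ v, ((asyncSS I S st).2 v).getD 0 ≤ T + A + B := by
    intro v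
    simp only [asyncSS]
    cases hv : st.2 v with
    | some x => simpa [hv] using (havail v).trans (by linarith : T ≤ T + A + B)
    | none =>
      refine minSaveTime_getD_le (by linarith) (fun e he => ?_) v
      simp only [List.mem_flatten, List.mem_map, List.mem_finRange, true_and] at he
      obtain ⟨_, ⟨p, rfl⟩, he⟩ := he
      exact hsaves p e he
  refine ⟨fun p => ?_, fun v => (havail' v).trans (by linarith [hss])⟩
  calc (asyncSS I S st).1 p ≤ T + A + B + ioCost I (S.load p) :=
        loadFold_le hμ hg _ havail' (by linarith [hproc p, hA p, hB p])
    _ ≤ T + ssCost I S := by linarith [hC p]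

lemma settledBy_asyncRun (hω : ∀ v, 0 ≤ I.ω v) (hμ : ∀ v, 0 ≤ I.μ v) (hg : 0 ≤ I.g)
    (hL : I.L = 0) :
    ∀ {sched : Schedule ν I.P} {st : (Fin I.P → ℝ) × (ν → Option ℝ)} {T : ℝ}, 0 ≤ T →
      SettledBy st T → SettledBy (asyncRun I st sched) (T + syncCost I sched)
  | [], _, _, _, h => by simpa [asyncRun, syncCost] using h
  | S :: rest, _, T, hT, h => by
    have hT' : 0 ≤ T + ssCost I S := add_nonneg hT (ssCost_nonneg hω hμ hg hL S)
    simpa [asyncRun, syncCost, add_assoc] using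
      settledBy_asyncRun hω hμ hg hL (sched := rest) hT' (settledBy_asyncSS hω hμ hg hL S hT h)

theorem statement_12_general {ν : Type} [DecidableEq ν] (I : Inst ν)
    (hω : ∀ v, 0 ≤ I.ω v) (hμ : ∀ v, 0 ≤ I.μ v) (hg : 0 ≤ I.g)
    (hL : I.L = 0)
    (sched : Schedule ν I.P) :
    asyncCost I sched ≤ syncCost I sched := by
  have hsettled := settledBy_asyncRun hω hμ hg hL (sched := sched) le_rfl
    (⟨fun _ => le_rfl, fun _ => le_rfl⟩ : SettledBy (fun _ => (0 : ℝ), fun _ => none) 0)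
  exact Real.iSup_le (fun p => by simpa using hsettled.1 p) (syncCost_nonneg hω hμ hg hL sched)

/-- For every MBSP instance with `L = 0` and every valid schedule,
the asynchronous cost is at most the synchronous cost. -/
theorem statement_12 {ν : Type} [Fintype ν] [DecidableEq ν] (I : Inst ν)
    (hω : ∀ v, 0 ≤ I.ω v) (hμ : ∀ v, 0 ≤ I.μ v) (hr : 0 ≤ I.r) (hg : 0 ≤ I.g)
    (hac : Acyclic I) (hL : I.L = 0)
    (sched : Schedule ν I.P) (hval : Valid I sched) :
    asyncCost I sched ≤ syncCost I sched :=
  statement_12_general I hω hμ hg hL sched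

end MBSP
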